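/- For y1, y2 > 0 set K1(y1,y2) = (1−e^{−λ y1})^{α1+α3}·(1−e^{−λ y2})^{α2} and f1(y1, y2) = (θ / C(θ)) · f_GE(y1; α1+α3, λ) · f_GE(y2; α2, λ) · [ θ K1 · C''(θ K1) + C'(θ K1) ]. Then the double integral of f1 over the region { (y1, y2) : 0 < y1 < y2 } equals α2 / (α1+α2+α3). (This is the probability P(Y1 < Y2) under the BGEPS distribution.) -/

import Mathlib

open Real Filter MeasureTheory

/-- The generalized exponential pdf `f_GE(x; α, λ) = α λ e^{-λx} (1-e^{-λx})^{α-1}`. -/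
noncomputable def fGE (x α lam : ℝ) : ℝ :=
  α * lam * Real.exp (-lam * x) * (1 - Real.exp (-lam * x)) ^ (α - 1)

/-- `K1(y1,y2) = (1-e^{-λ y1})^{α1+α3} (1-e^{-λ y2})^{α2}`. -/
noncomputable def K1 (α1 α3 α2 lam y1 y2 : ℝ) : ℝ :=
  (1 - Real.exp (-lam * y1)) ^ (α1 + α3) * (1 - Real.exp (-lam * y2)) ^ α2

/-!
For `|x|` below the radius of convergence,
`x C''(x) + C'(x) = (x C'(x))' = ∑ (n+1)² a_{n+1} xⁿ`.
With the GE distribution function `G(y; α) = (1 - e^{-λy})^α` one has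
`(n+1) fGE(y; α) G(y; α)ⁿ = fGE(y; (n+1)α)`, so on `0 < y1 < y2` the integrand is the mixture
`∑ₙ θ^{n+1} a_{n+1} / C(θ) · fGE(y1; (n+1)(α1+α3)) fGE(y2; (n+1)α2)`,
whose weights sum to `1`.
For independent GE variables with shapes `A`, `B` and a common rate, `P(Y1 < Y2) = B/(A+B)`,
which is unchanged when both shapes are multiplied by `n+1`.
-/

open Set Topology

noncomputable def geCDF (x α lam : ℝ) : ℝ := (1 - exp (-lam * x)) ^ α

section GE

variable {x α β lam : ℝ}

lemma one_sub_exp_neg_mul_pos (hlam : 0 < lam) (hx : 0 < x) : 0 < 1 - exp (-lam * x) := by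
  simpa using exp_lt_one_iff.2 (by nlinarith : -lam * x < 0)

lemma geCDF_pos (hlam : 0 < lam) (hx : 0 < x) : 0 < geCDF x α lam :=
  rpow_pos_of_pos (one_sub_exp_neg_mul_pos hlam hx) α

lemma geCDF_le_one (hlam : 0 < lam) (hx : 0 < x) (hα : 0 ≤ α) : geCDF x α lam ≤ 1 :=
  rpow_le_one (one_sub_exp_neg_mul_pos hlam hx).le (by simp [(exp_pos _).le]) hα

lemma geCDF_zero (hα : α ≠ 0) : geCDF 0 α lam = 0 := by
  simp [geCDF, zero_rpow hα]

lemma continuous_geCDF (hα : 0 ≤ α) : Continuous fun x => geCDF x α lam :=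
  continuous_iff_continuousAt.2 fun _ =>
    (continuousAt_rpow_const _ _ (Or.inr hα)).comp (by fun_prop)

lemma tendsto_geCDF_atTop (hlam : 0 < lam) : Tendsto (fun x => geCDF x α lam) atTop (𝓝 1) := by
  have hexp : Tendsto (fun x => exp (-lam * x)) atTop (𝓝 0) :=
    tendsto_exp_atBot.comp (tendsto_id.const_mul_atTop_of_neg (by linarith))
  have hbase : Tendsto (fun x => 1 - exp (-lam * x)) atTop (𝓝 1) := by
    simpa using tendsto_const_nhds.sub hexp
  simpa [geCDF, Function.comp_def] using
    (continuousAt_rpow_const 1 α (Or.inl one_ne_zero)).tendsto.comp hbase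

lemma hasDerivAt_geCDF (hlam : 0 < lam) (hx : 0 < x) :
    HasDerivAt (fun x => geCDF x α lam) (fGE x α lam) x := by
  have hinner : HasDerivAt (fun x => 1 - exp (-lam * x)) (exp (-lam * x) * lam) x := by
    simpa using ((hasDerivAt_id x).const_mul (-lam)).exp.const_sub 1
  refine ((hasDerivAt_rpow_const (Or.inl (one_sub_exp_neg_mul_pos hlam hx).ne')).comp x
    hinner).congr_deriv ?_
  simp only [fGE]
  ring

lemma fGE_nonneg (hlam : 0 < lam) (hα : 0 ≤ α) (hx : 0 < x) : 0 ≤ fGE x α lam := by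
  have := one_sub_exp_neg_mul_pos hlam hx
  unfold fGE
  positivity

lemma fGE_mul_geCDF (hlam : 0 < lam) (hx : 0 < x) (hαβ : α + β ≠ 0) :
    fGE x α lam * geCDF x β lam = α / (α + β) * fGE x (α + β) lam := by
  simp only [fGE, geCDF]
  rw [show α + β - 1 = α - 1 + β by ring, rpow_add (one_sub_exp_neg_mul_pos hlam hx)]
  field_simp

lemma fGE_mul_succ (hlam : 0 < lam) (hx : 0 < x) (n : ℕ) :
    fGE x (α * (n + 1)) lam = (n + 1) * (fGE x α lam * geCDF x α lam ^ n) := by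
  simp only [fGE, geCDF]
  rw [← rpow_natCast, ← rpow_mul (one_sub_exp_neg_mul_pos hlam hx).le,
    show α * (n + 1) - 1 = α - 1 + α * n by ring, rpow_add (one_sub_exp_neg_mul_pos hlam hx)]
  ring

lemma integrableOn_Ioi_fGE (hlam : 0 < lam) (hα : 0 < α) {t : ℝ} (ht : 0 ≤ t) :
    IntegrableOn (fun x => fGE x α lam) (Ioi t) :=
  integrableOn_Ioi_deriv_of_nonneg (continuous_geCDF hα.le).continuousWithinAt
    (fun _ hx => hasDerivAt_geCDF hlam (ht.trans_lt hx))
    (fun _ hx => fGE_nonneg hlam hα.le (ht.trans_lt hx)) (tendsto_geCDF_atTop hlam)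

lemma integral_Ioi_fGE (hlam : 0 < lam) (hα : 0 < α) {t : ℝ} (ht : 0 ≤ t) :
    ∫ x in Ioi t, fGE x α lam = 1 - geCDF t α lam :=
  integral_Ioi_of_hasDerivAt_of_nonneg (continuous_geCDF hα.le).continuousWithinAt
    (fun _ hx => hasDerivAt_geCDF hlam (ht.trans_lt hx))
    (fun _ hx => fGE_nonneg hlam hα.le (ht.trans_lt hx)) (tendsto_geCDF_atTop hlam)

lemma integrableOn_Ioi_fGE_mul_geCDF (hlam : 0 < lam) (hα : 0 < α) (hβ : 0 ≤ β) :
    IntegrableOn (fun x => fGE x α lam * geCDF x β lam) (Ioi 0) :=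
  IntegrableOn.congr_fun
    ((integrableOn_Ioi_fGE (α := α + β) hlam (by linarith) le_rfl).const_mul (α / (α + β)))
    (fun _ hx => (fGE_mul_geCDF hlam hx (by linarith)).symm) measurableSet_Ioi

lemma integral_Ioi_fGE_mul_geCDF (hlam : 0 < lam) (hα : 0 < α) (hβ : 0 ≤ β) :
    ∫ x in Ioi 0, fGE x α lam * geCDF x β lam = α / (α + β) := by
  rw [setIntegral_congr_fun measurableSet_Ioi fun _ hx => fGE_mul_geCDF hlam hx (by linarith),
    integral_const_mul, integral_Ioi_fGE hlam (by linarith) le_rfl,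
    geCDF_zero (by linarith), sub_zero, mul_one]

end GE

lemma summable_succ_mul_abs_mul_pow {c : ℕ → ℝ} {r s : ℝ}
    (hc : Summable fun n => |c n| * r ^ (n + 1)) (hs : 0 ≤ s) (hsr : s < r) :
    Summable fun n => (n + 1) * |c n| * s ^ n := by
  have hr : 0 < r := hs.trans_lt hsr
  have hq : s / r < 1 := (div_lt_one hr).2 hsr
  obtain ⟨M, hM⟩ :=
    (tendsto_pow_const_mul_const_pow_of_lt_one 1 (by positivity) hq).bddAbove_range
  refine .of_nonneg_of_le (fun n => by positivity) (fun n => ?_) (hc.mul_left ((M + 1) / r))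
  have hMn : (n : ℝ) ^ 1 * (s / r) ^ n ≤ M := hM (mem_range_self n)
  have hqn : (s / r) ^ n ≤ 1 := pow_le_one₀ (by positivity) hq.le
  calc (n + 1) * |c n| * s ^ n
      = ((n : ℝ) ^ 1 * (s / r) ^ n + (s / r) ^ n) / r * (|c n| * r ^ (n + 1)) := by
        rw [div_pow, pow_succ]; field_simp; ring
    _ ≤ (M + 1) / r * (|c n| * r ^ (n + 1)) := by gcongr

lemma hasDerivAt_tsum_mul_pow_succ {c : ℕ → ℝ} {r y : ℝ}
    (hc : Summable fun n => |c n| * r ^ (n + 1)) (hy : |y| < r) :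
    HasDerivAt (fun x => ∑' n, c n * x ^ (n + 1)) (∑' n, (n + 1) * c n * y ^ n) y := by
  obtain ⟨s, hys, hsr⟩ := exists_between hy
  have hs : 0 ≤ s := (abs_nonneg y).trans hys.le
  refine hasDerivAt_tsum_of_isPreconnected (summable_succ_mul_abs_mul_pow hc hs hsr)
    Metric.isOpen_ball (convex_ball (0 : ℝ) s).isPreconnected (y₀ := 0)
    (g := fun n x => c n * x ^ (n + 1)) (g' := fun n x => (n + 1) * c n * x ^ n)
    (fun n x _ => ?_) (fun n x hx => ?_) (Metric.mem_ball_self ((abs_nonneg y).trans_lt hys))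
    (by simp) (by simpa using hys)
  · exact ((hasDerivAt_pow (n + 1) x).const_mul (c n)).congr_deriv (by push_cast; ring)
  · have hxs : |x| ≤ s := by simpa using (mem_ball_zero_iff.1 hx).le
    rw [norm_mul, norm_mul, norm_pow, Real.norm_eq_abs, Real.norm_eq_abs, Real.norm_eq_abs,
      abs_of_nonneg (by positivity : (0 : ℝ) ≤ n + 1)]
    gcongr

lemma mul_deriv_deriv_add_deriv_eq {C E : ℝ → ℝ} {x₀ e : ℝ} (hx₀ : x₀ ≠ 0)
    (hE : HasDerivAt E e x₀) (hCE : ∀ᶠ x in 𝓝 x₀, x * deriv C x = E x) :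
    x₀ * deriv (deriv C) x₀ + deriv C x₀ = e := by
  have hC' : deriv C =ᶠ[𝓝 x₀] fun x => E x / x := by
    filter_upwards [hCE, eventually_ne_nhds hx₀] with x hx hx0
    rw [← hx, mul_div_cancel_left₀ _ hx0]
  have hdiff : DifferentiableAt ℝ (deriv C) x₀ :=
    (hE.differentiableAt.div differentiableAt_id hx₀).congr_of_eventuallyEq hC'
  have hprod :
      HasDerivAt (fun x => x * deriv C x) (deriv C x₀ + x₀ * deriv (deriv C) x₀) x₀ := by
    simpa using (hasDerivAt_id' x₀).fun_mul hdiff.hasDerivAt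
  rw [add_comm]
  exact hprod.unique (hE.congr_of_eventuallyEq hCE)

lemma mul_deriv_deriv_add_deriv_tsum_mul_pow_succ {c : ℕ → ℝ} {r x : ℝ}
    (hc : Summable fun n => |c n| * r ^ (n + 1)) (hx₀ : x ≠ 0) (hx : |x| < r) :
    x * deriv (deriv fun x => ∑' n, c n * x ^ (n + 1)) x +
        deriv (fun x => ∑' n, c n * x ^ (n + 1)) x =
      ∑' n, (n + 1) ^ 2 * c n * x ^ n := by
  obtain ⟨s, hxs, hsr⟩ := exists_between hx
  have hE : Summable fun n => |(n + 1) * c n| * s ^ (n + 1) := by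
    refine ((summable_succ_mul_abs_mul_pow hc ((abs_nonneg x).trans hxs.le) hsr).mul_left s).congr
      fun n => ?_
    rw [abs_mul, abs_of_nonneg (by positivity : (0 : ℝ) ≤ n + 1)]
    ring
  refine mul_deriv_deriv_add_deriv_eq hx₀
    ((hasDerivAt_tsum_mul_pow_succ hE hxs).congr_deriv (tsum_congr fun n => by ring)) ?_
  filter_upwards [(isOpen_lt continuous_abs continuous_const).mem_nhds hx] with y hy
  rw [(hasDerivAt_tsum_mul_pow_succ hc hy).deriv, ← tsum_mul_left]
  exact tsum_congr fun n => by ring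

lemma measurableSet_pos_lt : MeasurableSet {q : ℝ × ℝ | 0 < q.1 ∧ q.1 < q.2} :=
  (measurableSet_lt measurable_const measurable_fst).inter
    (measurableSet_lt measurable_fst measurable_snd)

section Triangle

variable {A B lam : ℝ}

lemma integrableOn_fGE_mul_fGE (hlam : 0 < lam) (hA : 0 < A) (hB : 0 < B) :
    IntegrableOn (fun p : ℝ × ℝ => fGE p.1 A lam * fGE p.2 B lam)
      {q : ℝ × ℝ | 0 < q.1 ∧ q.1 < q.2} := by
  have hprod :
      IntegrableOn (fun p : ℝ × ℝ => fGE p.1 A lam * fGE p.2 B lam) (Ioi 0 ×ˢ Ioi 0) := by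
    rw [IntegrableOn, Measure.volume_eq_prod, ← Measure.prod_restrict]
    exact (integrableOn_Ioi_fGE hlam hA le_rfl).mul_prod (integrableOn_Ioi_fGE hlam hB le_rfl)
  exact hprod.mono_set fun q hq => ⟨hq.1, hq.1.trans hq.2⟩

lemma integral_fGE_mul_fGE (hlam : 0 < lam) (hA : 0 < A) (hB : 0 < B) :
    ∫ p in {q : ℝ × ℝ | 0 < q.1 ∧ q.1 < q.2}, fGE p.1 A lam * fGE p.2 B lam =
      B / (A + B) := by
  set S := {q : ℝ × ℝ | 0 < q.1 ∧ q.1 < q.2}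
  set f := fun p : ℝ × ℝ => fGE p.1 A lam * fGE p.2 B lam
  have hsection : ∀ x, ∫ y, S.indicator f (x, y) =
      (Ioi 0).indicator (fun x => fGE x A lam * (1 - geCDF x B lam)) x := by
    intro x
    by_cases hx : 0 < x
    · have : (fun y => S.indicator f (x, y)) =
          (Ioi x).indicator fun y => fGE x A lam * fGE y B lam := by
        ext y; simp [S, f, indicator, hx]
      rw [this, integral_indicator measurableSet_Ioi, integral_const_mul,
        integral_Ioi_fGE hlam hB hx.le, indicator_of_mem (mem_Ioi.2 hx)]
    · have : (fun y => S.indicator f (x, y)) = fun _ => 0 := by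
        ext y; simp [S, f, indicator, hx]
      rw [this, integral_zero, indicator_of_notMem (by simpa using hx)]
  have hint :=
    (integrable_indicator_iff measurableSet_pos_lt).2 (integrableOn_fGE_mul_fGE hlam hA hB)
  rw [Measure.volume_eq_prod] at hint
  calc ∫ p in S, f p = ∫ p, S.indicator f p := (integral_indicator measurableSet_pos_lt).symm
    _ = ∫ x, ∫ y, S.indicator f (x, y) := by
      rw [Measure.volume_eq_prod]; exact integral_prod _ hint
    _ = ∫ x in Ioi 0, fGE x A lam - fGE x A lam * geCDF x B lam := by
      simp_rw [hsection, integral_indicator measurableSet_Ioi, mul_one_sub]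
    _ = B / (A + B) := by
      rw [integral_sub (integrableOn_Ioi_fGE hlam hA le_rfl)
          (integrableOn_Ioi_fGE_mul_geCDF hlam hA hB.le),
        integral_Ioi_fGE_mul_geCDF hlam hA hB.le, integral_Ioi_fGE hlam hA le_rfl,
        geCDF_zero hA.ne']
      field_simp
      ring

end Triangle

lemma integral_tsum_mul_fGE_mul_fGE {w : ℕ → ℝ} {A B lam : ℝ} (hw : Summable fun n => |w n|)
    (hlam : 0 < lam) (hA : 0 < A) (hB : 0 < B) :
    ∫ p in {q : ℝ × ℝ | 0 < q.1 ∧ q.1 < q.2},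
        ∑' n : ℕ, w n * (fGE p.1 (A * (n + 1)) lam * fGE p.2 (B * (n + 1)) lam) =
      (∑' n, w n) * (B / (A + B)) := by
  have hAn (n : ℕ) : 0 < A * (n + 1) := by positivity
  have hBn (n : ℕ) : 0 < B * (n + 1) := by positivity
  have hratio (n : ℕ) : B * (n + 1) / (A * (n + 1) + B * (n + 1)) = B / (A + B) := by
    rw [← add_mul, mul_div_mul_right _ _ (by positivity)]
  have hterm (n : ℕ) : ∫ p in {q : ℝ × ℝ | 0 < q.1 ∧ q.1 < q.2},
      w n * (fGE p.1 (A * (n + 1)) lam * fGE p.2 (B * (n + 1)) lam) = w n * (B / (A + B)) := by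
    rw [integral_const_mul, integral_fGE_mul_fGE hlam (hAn n) (hBn n), hratio]
  have hnorm (n : ℕ) : ∫ p in {q : ℝ × ℝ | 0 < q.1 ∧ q.1 < q.2},
      ‖w n * (fGE p.1 (A * (n + 1)) lam * fGE p.2 (B * (n + 1)) lam)‖ =
        |w n| * (B / (A + B)) := by
    rw [setIntegral_congr_fun measurableSet_pos_lt fun p hp => by
        rw [norm_mul, Real.norm_eq_abs, Real.norm_of_nonneg (mul_nonneg
          (fGE_nonneg hlam (hAn n).le hp.1) (fGE_nonneg hlam (hBn n).le (hp.1.trans hp.2)))],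
      integral_const_mul, integral_fGE_mul_fGE hlam (hAn n) (hBn n), hratio]
  rw [← integral_tsum_of_summable_integral_norm
      (fun n => (integrableOn_fGE_mul_fGE hlam (hAn n) (hBn n)).const_mul (w n))
      (by simpa only [hnorm] using hw.mul_right (B / (A + B))),
    tsum_congr hterm, tsum_mul_right]

lemma K1_pos {α1 α2 α3 lam y1 y2 : ℝ} (hlam : 0 < lam) (hy1 : 0 < y1) (hy2 : 0 < y2) :
    0 < K1 α1 α3 α2 lam y1 y2 :=
  mul_pos (geCDF_pos hlam hy1) (geCDF_pos hlam hy2)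

lemma K1_le_one {α1 α2 α3 lam y1 y2 : ℝ} (hlam : 0 < lam) (hy1 : 0 < y1) (hy2 : 0 < y2)
    (hA : 0 ≤ α1 + α3) (hα2 : 0 ≤ α2) : K1 α1 α3 α2 lam y1 y2 ≤ 1 :=
  mul_le_one₀ (geCDF_le_one hlam hy1 hA) (geCDF_pos hlam hy2).le (geCDF_le_one hlam hy2 hα2)

lemma mul_fGE_mul_fGE_mul_tsum_K1_pow {b : ℕ → ℝ} {κ θ α1 α2 α3 lam y1 y2 : ℝ}
    (hlam : 0 < lam) (hy1 : 0 < y1) (hy2 : 0 < y2) :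
    κ * fGE y1 (α1 + α3) lam * fGE y2 α2 lam *
        ∑' n : ℕ, (n + 1) ^ 2 * b n * (θ * K1 α1 α3 α2 lam y1 y2) ^ n =
      ∑' n : ℕ,
        κ * θ ^ n * b n * (fGE y1 ((α1 + α3) * (n + 1)) lam * fGE y2 (α2 * (n + 1)) lam) := by
  rw [← tsum_mul_left]
  refine tsum_congr fun n => ?_
  rw [fGE_mul_succ hlam hy1, fGE_mul_succ hlam hy2,
    show K1 α1 α3 α2 lam y1 y2 = geCDF y1 (α1 + α3) lam * geCDF y2 α2 lam from rfl, mul_pow,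
    mul_pow]
  ring

theorem stmt_10_general (a : ℕ → ℝ)
    (θ : ℝ) (hθ : 0 < θ)
    (hrad : ∃ r : ℝ, θ < r ∧ Summable fun n : ℕ => |a (n + 1)| * r ^ (n + 1))
    (C : ℝ → ℝ) (hC : ∀ x : ℝ, C x = ∑' n : ℕ, a (n + 1) * x ^ (n + 1))
    (hCθ : 0 < C θ)
    (α1 α2 α3 lam : ℝ) (hα1 : 0 < α1) (hα2 : 0 < α2) (hα3 : 0 < α3) (hlam : 0 < lam) :
    ∫ p in {q : ℝ × ℝ | 0 < q.1 ∧ q.1 < q.2},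
        θ / C θ * fGE p.1 (α1 + α3) lam * fGE p.2 α2 lam *
          (θ * K1 α1 α3 α2 lam p.1 p.2 * deriv (deriv C) (θ * K1 α1 α3 α2 lam p.1 p.2) +
            deriv C (θ * K1 α1 α3 α2 lam p.1 p.2)) =
      α2 / (α1 + α2 + α3) := by
  obtain ⟨r, hθr, hsum⟩ := hrad
  have hA : 0 < α1 + α3 := by linarith
  set w : ℕ → ℝ := fun n => θ ^ (n + 1) * a (n + 1) / C θ
  have hw : Summable fun n => |w n| := by
    refine .of_nonneg_of_le (fun _ => abs_nonneg _) (fun n => ?_) (hsum.div_const (C θ))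
    rw [abs_div, abs_mul, abs_of_pos hCθ, abs_of_pos (pow_pos hθ _), mul_comm]
    gcongr
  have hw_one : ∑' n, w n = 1 := by
    rw [tsum_div_const, tsum_congr fun n => mul_comm _ _, ← hC, div_self hCθ.ne']
  have hbracket : ∀ x, 0 < x → x ≤ θ →
      x * deriv (deriv C) x + deriv C x = ∑' n : ℕ, (n + 1) ^ 2 * a (n + 1) * x ^ n := by
    intro x hx hxθ
    rw [funext hC]
    exact mul_deriv_deriv_add_deriv_tsum_mul_pow_succ hsum hx.ne' (by rw [abs_of_pos hx]; linarith)
  calc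
    _ = ∫ p in {q : ℝ × ℝ | 0 < q.1 ∧ q.1 < q.2},
          ∑' n : ℕ,
            w n * (fGE p.1 ((α1 + α3) * (n + 1)) lam * fGE p.2 (α2 * (n + 1)) lam) := by
      refine setIntegral_congr_fun measurableSet_pos_lt fun p ⟨hy1, hy12⟩ => ?_
      have hy2 := hy1.trans hy12
      rw [hbracket _ (mul_pos hθ (K1_pos hlam hy1 hy2))
          (mul_le_of_le_one_right hθ.le (K1_le_one hlam hy1 hy2 hA.le hα2.le)),
        mul_fGE_mul_fGE_mul_tsum_K1_pow hlam hy1 hy2]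
      exact tsum_congr fun n => by ring
    _ = α2 / (α1 + α2 + α3) := by
      rw [integral_tsum_mul_fGE_mul_fGE hw hlam hA hα2, hw_one, one_mul, add_right_comm]

/-- `P(Y1 < Y2) = α2/(α1+α2+α3)` under the BGEPS distribution: the double integral of
`f1(y1,y2) = (θ/C(θ)) f_GE(y1; α1+α3, λ) f_GE(y2; α2, λ) (θ K1 C''(θ K1) + C'(θ K1))`
over `{(y1,y2) : 0 < y1 < y2}` equals `α2/(α1+α2+α3)`. -/
theorem stmt_10 (a : ℕ → ℝ) (ha : ∀ n, 0 ≤ a n) (hne : ∃ n : ℕ, 0 < a (n + 1))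
    (θ : ℝ) (hθ : 0 < θ)
    (hrad : ∃ r : ℝ, θ < r ∧ Summable fun n : ℕ => |a (n + 1)| * r ^ (n + 1))
    (C : ℝ → ℝ) (hC : ∀ x : ℝ, C x = ∑' n : ℕ, a (n + 1) * x ^ (n + 1))
    (hCθ : 0 < C θ)
    (α1 α2 α3 lam : ℝ) (hα1 : 0 < α1) (hα2 : 0 < α2) (hα3 : 0 < α3) (hlam : 0 < lam) :
    ∫ p in {q : ℝ × ℝ | 0 < q.1 ∧ q.1 < q.2},
        θ / C θ * fGE p.1 (α1 + α3) lam * fGE p.2 α2 lam *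
          (θ * K1 α1 α3 α2 lam p.1 p.2 * deriv (deriv C) (θ * K1 α1 α3 α2 lam p.1 p.2) +
            deriv C (θ * K1 α1 α3 α2 lam p.1 p.2)) =
      α2 / (α1 + α2 + α3) :=
  stmt_10_general a θ hθ hrad C hC hCθ α1 α2 α3 lam hα1 hα2 hα3 hlam
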